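/- Let p ≥ 3 be prime, a, b ∈ E_p with b ≠ 1, and g(u) = a(b²u² + 1)/(b² + u²). If x ∈ ℚ_p satisfies |x² + 1|_p > |b² − 1|_p (with x² + b² ≠ 0), then |g(x) − 1|_p < 1, i.e., g(x) ∈ E_p. -/

import Mathlib

/-!
Put `u = x² + 1` and `e = b² - 1`, so that `b² + x² = u + e` and
`g(x) - 1 = ((ab² - 1) u - (a + 1) e) / (u + e)`.
Elements within distance `< 1` of `1` form a multiplicative group, so `‖ab² - 1‖ < 1`, while
`‖a + 1‖ ≤ 1`. Since `‖e‖ < ‖u‖`, the ultrametric inequality gives `‖u + e‖ = ‖u‖` and bounds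
the numerator by `max (‖ab² - 1‖ ‖u‖) (‖a + 1‖ ‖e‖) < ‖u‖`.
-/

open IsUltrametricDist

section Ultrametric

variable {K : Type*} [NormedField K] [IsUltrametricDist K] {a b u e s t : K}

lemma norm_le_one_of_norm_sub_one_lt_one (ha : ‖a - 1‖ < 1) : ‖a‖ ≤ 1 := by
  simpa using (norm_add_one_le_max_norm_one (a - 1)).trans (max_le ha.le le_rfl)

lemma norm_add_one_le_one_of_norm_sub_one_lt_one (ha : ‖a - 1‖ < 1) : ‖a + 1‖ ≤ 1 :=
  (norm_add_one_le_max_norm_one a).trans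
    (max_le (norm_le_one_of_norm_sub_one_lt_one ha) le_rfl)

lemma norm_mul_sub_one_lt_one (ha : ‖a - 1‖ < 1) (hb : ‖b - 1‖ < 1) : ‖a * b - 1‖ < 1 := by
  have hab : ‖a * (b - 1)‖ < 1 := by
    rw [norm_mul]
    exact lt_of_le_of_lt (mul_le_of_le_one_left (norm_nonneg _)
      (norm_le_one_of_norm_sub_one_lt_one ha)) hb
  calc ‖a * b - 1‖ = ‖a * (b - 1) + (a - 1)‖ := by ring_nf
    _ ≤ max ‖a * (b - 1)‖ ‖a - 1‖ := norm_add_le_max _ _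
    _ < 1 := max_lt hab ha

lemma norm_add_eq_left_of_norm_lt (he : ‖e‖ < ‖u‖) : ‖u + e‖ = ‖u‖ := by
  rw [norm_add_eq_max_of_norm_ne_norm he.ne', max_eq_left he.le]

lemma norm_mul_sub_mul_div_add_lt_one (hs : ‖s‖ < 1) (ht : ‖t‖ ≤ 1) (he : ‖e‖ < ‖u‖) :
    ‖(s * u - t * e) / (u + e)‖ < 1 := by
  have hu : 0 < ‖u‖ := (norm_nonneg e).trans_lt he
  have hsu : ‖s * u‖ < ‖u‖ := by
    rw [norm_mul]
    exact mul_lt_of_lt_one_left hu hs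
  have hte : ‖-(t * e)‖ < ‖u‖ := by
    rw [norm_neg, norm_mul]
    exact (mul_le_of_le_one_left (norm_nonneg e) ht).trans_lt he
  rw [norm_div, norm_add_eq_left_of_norm_lt he, div_lt_one hu, sub_eq_add_neg]
  exact (norm_add_le_max _ _).trans_lt (max_lt hsu hte)

theorem norm_mul_div_sub_one_lt_one {x : K} (ha : ‖a - 1‖ < 1) (hb : ‖b - 1‖ < 1)
    (hx : ‖b ^ 2 - 1‖ < ‖x ^ 2 + 1‖) :
    ‖a * (b ^ 2 * x ^ 2 + 1) / (b ^ 2 + x ^ 2) - 1‖ < 1 := by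
  have hden : b ^ 2 + x ^ 2 = (x ^ 2 + 1) + (b ^ 2 - 1) := by ring
  have hden_ne : b ^ 2 + x ^ 2 ≠ 0 := by
    rw [← norm_pos_iff, hden, norm_add_eq_left_of_norm_lt hx]
    exact (norm_nonneg _).trans_lt hx
  have hab2 : ‖a * b ^ 2 - 1‖ < 1 :=
    norm_mul_sub_one_lt_one ha (pow_two b ▸ norm_mul_sub_one_lt_one hb hb)
  have hsplit : a * (b ^ 2 * x ^ 2 + 1) / (b ^ 2 + x ^ 2) - 1 =
      ((a * b ^ 2 - 1) * (x ^ 2 + 1) - (a + 1) * (b ^ 2 - 1)) /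
        ((x ^ 2 + 1) + (b ^ 2 - 1)) := by
    rw [div_sub_one hden_ne, hden]
    ring
  rw [hsplit]
  exact norm_mul_sub_mul_div_add_lt_one hab2
    (norm_add_one_le_one_of_norm_sub_one_lt_one ha) hx

end Ultrametric

theorem stmt15_general (p : ℕ) [Fact p.Prime] (a b : ℚ_[p])
    (ha : ‖a - 1‖ < 1) (hb : ‖b - 1‖ < 1) (x : ℚ_[p])
    (hx : ‖x ^ 2 + 1‖ > ‖b ^ 2 - 1‖) :
    ‖a * (b ^ 2 * x ^ 2 + 1) / (b ^ 2 + x ^ 2) - 1‖ < 1 :=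
  norm_mul_div_sub_one_lt_one ha hb hx

theorem stmt15 (p : ℕ) [Fact p.Prime] (hp : 3 ≤ p) (a b : ℚ_[p])
    (ha : ‖a - 1‖ < 1) (hb : ‖b - 1‖ < 1) (hb1 : b ≠ 1) (x : ℚ_[p])
    (hx : ‖x ^ 2 + 1‖ > ‖b ^ 2 - 1‖) (hd : x ^ 2 + b ^ 2 ≠ 0) :
    ‖a * (b ^ 2 * x ^ 2 + 1) / (b ^ 2 + x ^ 2) - 1‖ < 1 :=
  stmt15_general p a b ha hb x hx
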